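/- arXiv:2504.10389 — 5 statements merged into one kernel-verified Lean document; each statement's English description precedes it below -/
import Mathlib

section
/- Let d ∈ ℕ+, K ∈ ℕ+, coefficients c : Fin d → ℝ with c k ≥ 1 for all k, a finite candidate set S with types t : S → Fin d → {0,1}, and φ_k(S) = Σ_{j∈S} t j k. Define OPT as the supremum over x : S → [0,1] with Σ_j x j ≤ K of min_k c k · Σ_j x j · t j k. Then min_k c k · min(K/d, φ_k(S)) ≤ OPT ≤ min_k c k · min(K, φ_k(S)). -/
/-- Minimum of a function over `Fin d` (with `0 < d`). -/
noncomputable def finMin {d : ℕ} (hd : 0 < d) (f : Fin d → ℝ) : ℝ :=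
  Finset.univ.inf' ⟨⟨0, hd⟩, Finset.mem_univ _⟩ f

lemma finMin_le_finMin {d : ℕ} (hd : 0 < d) {f g : Fin d → ℝ}
    (h : ∀ k, f k ≤ g k) : finMin hd f ≤ finMin hd g :=
  Finset.le_inf' _ _ fun k _ => (Finset.inf'_le f (Finset.mem_univ k)).trans (h k)

/-- Bounds on the fluid LP optimum of the diversity-fair selection problem. -/
theorem stmt0 (d K m : ℕ) (hd : 0 < d) (hK : 0 < K) (hm : 0 < m)
    (c : Fin d → ℝ) (hc : ∀ k, 1 ≤ c k)
    (t : Fin m → Fin d → ℝ) (ht : ∀ j k, t j k = 0 ∨ t j k = 1)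
    (OPT : ℝ)
    (hOPT : IsGreatest {v : ℝ | ∃ x : Fin m → ℝ,
        (∀ j, 0 ≤ x j ∧ x j ≤ 1) ∧ (∑ j, x j) ≤ (K : ℝ) ∧
        v = finMin hd (fun k => c k * ∑ j, x j * t j k)} OPT) :
    finMin hd (fun k => c k * min ((K : ℝ) / d) (∑ j, t j k)) ≤ OPT ∧
    OPT ≤ finMin hd (fun k => c k * min (K : ℝ) (∑ j, t j k)) := by
  obtain ⟨hmem, hub⟩ := hOPT
  have htnn : ∀ j k, 0 ≤ t j k := fun j k => by rcases ht j k with h | h <;> simp [h]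
  have htle : ∀ j k, t j k ≤ 1 := fun j k => by rcases ht j k with h | h <;> simp [h]
  have htsq : ∀ j k, t j k * t j k = t j k := fun j k => by rcases ht j k with h | h <;> simp [h]
  set φ : Fin d → ℝ := fun k => ∑ j, t j k with hφ
  have hφnn : ∀ k, 0 ≤ φ k := fun k => Finset.sum_nonneg fun j _ => htnn j k
  have hKd : 0 ≤ (K : ℝ) / d := by positivity
  have hcnn : ∀ k, 0 ≤ c k := fun k => le_trans zero_le_one (hc k)
  constructor
  · -- lower bound
    set r : Fin d → ℝ := fun k => if φ k = 0 then 0 else min ((K : ℝ) / d) (φ k) / φ k with hr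
    have hφpos : ∀ k, φ k ≠ 0 → 0 < φ k := fun k h => lt_of_le_of_ne (hφnn k) (Ne.symm h)
    have hrnn : ∀ k, 0 ≤ r k := by
      intro k
      simp only [hr]
      split
      · exact le_refl 0
      · next h => exact div_nonneg (le_min hKd (hφnn k)) (hφnn k)
    have hrle : ∀ k, r k ≤ 1 := by
      intro k
      simp only [hr]
      split
      · exact zero_le_one
      · next h => exact div_le_one_of_le₀ (min_le_right _ _) (hφnn k)
    have hrφ : ∀ k, r k * φ k = min ((K : ℝ) / d) (φ k) := by
      intro k
      simp only [hr]
      split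
      · next h => simp [h, min_eq_right hKd]
      · next h => field_simp
    set x : Fin m → ℝ := fun j => min 1 (∑ k, t j k * r k) with hx
    have hsnn : ∀ j, 0 ≤ ∑ k, t j k * r k := fun j =>
      Finset.sum_nonneg fun k _ => mul_nonneg (htnn j k) (hrnn k)
    have hx01 : ∀ j, 0 ≤ x j ∧ x j ≤ 1 :=
      fun j => ⟨le_min zero_le_one (hsnn j), min_le_left _ _⟩
    have hxge : ∀ j k, t j k * r k ≤ x j := by
      intro j k
      refine le_min ?_ ?_
      · calc t j k * r k ≤ 1 * 1 :=
              mul_le_mul (htle j k) (hrle k) (hrnn k) zero_le_one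
          _ = 1 := one_mul 1
      · exact Finset.single_le_sum (f := fun k => t j k * r k)
          (fun k _ => mul_nonneg (htnn j k) (hrnn k)) (Finset.mem_univ k)
    have hxsum : (∑ j, x j) ≤ (K : ℝ) := by
      calc ∑ j, x j ≤ ∑ j, ∑ k, t j k * r k :=
            Finset.sum_le_sum fun j _ => min_le_right _ _
        _ = ∑ k, r k * φ k := by
            rw [Finset.sum_comm]
            refine Finset.sum_congr rfl fun k _ => ?_
            simp only [hφ]
            rw [Finset.mul_sum]
            exact Finset.sum_congr rfl fun j _ => mul_comm _ _
        _ = ∑ k : Fin d, min ((K : ℝ) / d) (φ k) :=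
            Finset.sum_congr rfl fun k _ => hrφ k
        _ ≤ ∑ _k : Fin d, (K : ℝ) / d :=
            Finset.sum_le_sum fun k _ => min_le_left _ _
        _ = d * ((K : ℝ) / d) := by simp [Finset.sum_const, Finset.card_univ]
        _ = K := by
            field_simp
    have hxk : ∀ k, min ((K : ℝ) / d) (φ k) ≤ ∑ j, x j * t j k := by
      intro k
      calc min ((K : ℝ) / d) (φ k) = r k * φ k := (hrφ k).symm
        _ = ∑ j, (t j k * r k) * t j k := by
            simp only [hφ, Finset.mul_sum]
            refine Finset.sum_congr rfl fun j _ => ?_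
            rw [mul_comm (t j k) (r k), mul_assoc, htsq j k]
        _ ≤ ∑ j, x j * t j k :=
            Finset.sum_le_sum fun j _ =>
              mul_le_mul_of_nonneg_right (hxge j k) (htnn j k)
    have hvmem : finMin hd (fun k => c k * ∑ j, x j * t j k) ∈
        {v : ℝ | ∃ x : Fin m → ℝ,
          (∀ j, 0 ≤ x j ∧ x j ≤ 1) ∧ (∑ j, x j) ≤ (K : ℝ) ∧
          v = finMin hd (fun k => c k * ∑ j, x j * t j k)} := ⟨x, hx01, hxsum, rfl⟩
    refine le_trans ?_ (hub hvmem)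
    apply finMin_le_finMin
    intro k
    exact mul_le_mul_of_nonneg_left (hxk k) (hcnn k)
  · -- upper bound
    obtain ⟨x, hx01, hxs, hOeq⟩ := hmem
    rw [hOeq]
    apply finMin_le_finMin
    intro k
    apply mul_le_mul_of_nonneg_left _ (hcnn k)
    refine le_min ?_ ?_
    · calc ∑ j, x j * t j k ≤ ∑ j, x j := by
            apply Finset.sum_le_sum
            intro j _
            calc x j * t j k ≤ x j * 1 := by
                  exact mul_le_mul_of_nonneg_left (htle j k) (hx01 j).1
              _ = x j := mul_one _
        _ ≤ K := hxs
    · apply Finset.sum_le_sum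
      intro j _
      calc x j * t j k ≤ 1 * t j k := mul_le_mul_of_nonneg_right (hx01 j).2 (htnn j k)
        _ = t j k := one_mul _
end

section
/- Define OPT = max over x : S → [0,1], Σ_j x_j ≤ K of min_k c_k Σ_j x_j t_{jk}, and define the performance of the optimal offline randomized algorithm OFF = sup over random subsets A ⊆ S with |A| ≤ K almost surely of min_k c_k E[Σ_{j∈A} t_{jk}]. Then OPT = OFF. -/
/-!
A random subset `A` with `|A| ≤ K` gives the feasible fractional solution `x_j = Pr[j ∈ A]`, and
by linearity of expectation its objective is the LP objective of `x`. Conversely, the objective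
is a continuous function of `x`, so it suffices that every feasible `x` is a limit of such
inclusion-probability vectors; we approximate `x` by `⌊N x⌋ / N`. For `x = a / N` with integers
`a_j ≤ N` and `∑ a_j ≤ K N`, write `a_j` copies of each `j` consecutively into a `K × N` grid,
row by row, and choose a column uniformly at random: it holds at most `K` entries, these are
distinct because `a_j ≤ N`, and `j` appears in exactly `a_j` of the `N` columns.
-/

open Finset Filter Topology

theorem csSup_image_eq_of_subset_closure {X α : Type*} [TopologicalSpace X]
    [ConditionallyCompleteLinearOrder α] [TopologicalSpace α] [OrderTopology α]
    {F : X → α} (hF : Continuous F) {P M : Set X} (hP : IsCompact P) (hM : M.Nonempty)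
    (hMP : M ⊆ P) (hPM : P ⊆ closure M) :
    sSup (F '' P) = sSup (F '' M) := by
  have hFP : F '' P ⊆ closure (F '' M) :=
    (Set.image_mono hPM).trans (image_closure_subset_closure_image hF)
  have hlub : IsLUB (F '' P) (sSup (F '' P)) :=
    isLUB_csSup ((hM.mono hMP).image F) (hP.bddAbove_image hF.continuousOn)
  exact (((isLUB_iff_of_subset_of_subset_closure (Set.image_mono hMP) hFP).2 hlub).csSup_eq
    (hM.image F)).symm

section InclusionProb

variable {ι : Type*}

noncomputable def inclusionProb (μ : PMF (Finset ι)) (j : ι) : ℝ :=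
  (μ.toOuterMeasure {A | j ∈ A}).toReal

theorem PMF.sum_toReal_eq_one {α : Type*} [Fintype α] (μ : PMF α) : ∑ a, (μ a).toReal = 1 := by
  rw [← ENNReal.toReal_sum fun a _ => μ.apply_ne_top a, ← tsum_fintype (L := .unconditional α),
    μ.tsum_coe, ENNReal.toReal_one]

theorem inclusionProb_eq_sum [Fintype ι] [DecidableEq ι] (μ : PMF (Finset ι)) (j : ι) :
    inclusionProb μ j = ∑ A with j ∈ A, (μ A).toReal := by
  rw [inclusionProb, ← ENNReal.toReal_sum fun A _ => μ.apply_ne_top A,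
    ← μ.toOuterMeasure_apply_finset, coe_filter_univ]

theorem sum_toReal_mul_sum_eq_sum_inclusionProb_mul [Fintype ι] (μ : PMF (Finset ι))
    (f : ι → ℝ) :
    ∑ A, (μ A).toReal * ∑ j ∈ A, f j = ∑ j, inclusionProb μ j * f j := by
  classical
  simp only [inclusionProb_eq_sum, sum_mul, mul_sum, sum_filter]
  rw [sum_comm]
  refine sum_congr rfl fun A _ => ?_
  simp only [ite_mul, zero_mul, sum_ite_mem, univ_inter]

theorem inclusionProb_nonneg (μ : PMF (Finset ι)) (j : ι) : 0 ≤ inclusionProb μ j :=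
  ENNReal.toReal_nonneg

theorem inclusionProb_le_one (μ : PMF (Finset ι)) (j : ι) : inclusionProb μ j ≤ 1 := by
  have h : μ.toOuterMeasure {A | j ∈ A} ≤ 1 :=
    (μ.toOuterMeasure_apply_eq_one_iff Set.univ).2 (Set.subset_univ _) ▸
      MeasureTheory.measure_mono (Set.subset_univ _)
  exact (ENNReal.toReal_mono ENNReal.one_ne_top h).trans_eq ENNReal.toReal_one

theorem sum_inclusionProb_le [Fintype ι] {K : ℕ} {μ : PMF (Finset ι)}
    (hμ : ∀ A ∈ μ.support, #A ≤ K) :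
    ∑ j, inclusionProb μ j ≤ K := by
  calc ∑ j, inclusionProb μ j = ∑ A, (μ A).toReal * #A := by
        simpa using (sum_toReal_mul_sum_eq_sum_inclusionProb_mul μ fun _ => 1).symm
    _ ≤ ∑ A, (μ A).toReal * K := by
        refine sum_le_sum fun A _ => ?_
        by_cases hA : A ∈ μ.support
        · exact mul_le_mul_of_nonneg_left (by exact_mod_cast hμ A hA) ENNReal.toReal_nonneg
        · simp [(μ.apply_eq_zero_iff A).2 hA]
    _ = K := by rw [← sum_mul, μ.sum_toReal_eq_one, one_mul]

end InclusionProb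

theorem exists_column_assignment {m N K : ℕ} (hN : 0 < N) (a : Fin m → ℕ) (haN : ∀ j, a j ≤ N)
    (haK : ∑ j, a j ≤ K * N) :
    ∃ col : (Σ j, Fin (a j)) → Fin N,
      (∀ j, Function.Injective fun k => col ⟨j, k⟩) ∧ ∀ u, #{s | col s = u} ≤ K := by
  -- copy `k` of `j` sits at cell `pos ⟨j, k⟩` of the grid filled row by row, in column `pos % N`
  set pos : (Σ j, Fin (a j)) → ℕ := fun s => finSigmaFinEquiv s
  refine ⟨fun s => ⟨pos s % N, Nat.mod_lt _ hN⟩, fun j k₁ k₂ h => ?_, fun u => ?_⟩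
  · have h' : (pos ⟨j, k₁⟩) % N = (pos ⟨j, k₂⟩) % N := congrArg Fin.val h
    simp only [pos, finSigmaFinEquiv_apply] at h'
    have hk : (k₁ : ℕ) % N = (k₂ : ℕ) % N := Nat.ModEq.add_left_cancel' _ h'
    rw [Nat.mod_eq_of_lt ((k₁.2).trans_le (haN j)),
      Nat.mod_eq_of_lt ((k₂.2).trans_le (haN j))] at hk
    exact Fin.ext hk
  · calc #{s | (⟨pos s % N, Nat.mod_lt _ hN⟩ : Fin N) = u}
        ≤ #(range K) := by
          refine card_le_card_of_injOn (fun s => pos s / N) (fun s _ => ?_) ?_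
          · exact mem_range.2 (Nat.div_lt_of_lt_mul ((finSigmaFinEquiv s).2.trans_le
              (haK.trans_eq (mul_comm K N))))
          · intro s₁ hs₁ s₂ hs₂ h
            simp only [mem_coe, mem_filter, mem_univ, true_and] at hs₁ hs₂
            have hmod : pos s₁ % N = pos s₂ % N := congrArg Fin.val (hs₁.trans hs₂.symm)
            have hpos : pos s₁ = pos s₂ := by
              rw [← Nat.div_add_mod (pos s₁) N, ← Nat.div_add_mod (pos s₂) N, hmod,
                show pos s₁ / N = pos s₂ / N from h]
            exact finSigmaFinEquiv.injective (Fin.ext hpos)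
      _ = K := card_range K

theorem exists_pmf_inclusionProb_eq_of_column_assignment {ι : Type*} [Fintype ι] [DecidableEq ι]
    {N K : ℕ} (hN : 0 < N) {a : ι → ℕ} (col : (Σ j, Fin (a j)) → Fin N)
    (hcol_inj : ∀ j, Function.Injective fun k => col ⟨j, k⟩)
    (hcol_card : ∀ u, #{s | col s = u} ≤ K) :
    ∃ μ : PMF (Finset ι), (∀ A ∈ μ.support, #A ≤ K) ∧ ∀ j, inclusionProb μ j = a j / N := by
  have : NeZero N := ⟨hN.ne'⟩
  set sel : Fin N → Finset ι := fun u => image Sigma.fst {s | col s = u}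
  refine ⟨(PMF.uniformOfFintype (Fin N)).map sel, ?_, fun j => ?_⟩
  · rw [PMF.support_map]
    rintro _ ⟨u, -, rfl⟩
    exact card_image_le.trans (hcol_card u)
  · have hsel : sel ⁻¹' {A | j ∈ A} = Set.range fun k => col ⟨j, k⟩ := by
      ext u
      simp [sel, Sigma.exists, eq_comm]
    rw [inclusionProb, PMF.toOuterMeasure_map_apply, hsel,
      PMF.toOuterMeasure_uniformOfFintype_apply, Set.card_range_of_injective (hcol_inj j)]
    simp

def fluidPolytope (ι : Type*) [Fintype ι] (K : ℕ) : Set (ι → ℝ) :=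
  {x | (∀ j, 0 ≤ x j ∧ x j ≤ 1) ∧ ∑ j, x j ≤ K}

theorem isCompact_fluidPolytope (ι : Type*) [Fintype ι] (K : ℕ) :
    IsCompact (fluidPolytope ι K) := by
  have hclosed : IsClosed (fluidPolytope ι K) := by
    simp only [fluidPolytope, Set.ofPred_and, Set.ofPred_forall]
    exact (isClosed_iInter fun j => (isClosed_le (by fun_prop) (by fun_prop)).inter
      (isClosed_le (by fun_prop) (by fun_prop))).inter (isClosed_le (by fun_prop) (by fun_prop))
  exact isCompact_Icc.of_isClosed_subset hclosed fun x hx =>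
    ⟨fun j => (hx.1 j).1, fun j => (hx.1 j).2⟩

theorem inclusionProb_mem_fluidPolytope {ι : Type*} [Fintype ι] {K : ℕ} {μ : PMF (Finset ι)}
    (hμ : ∀ A ∈ μ.support, #A ≤ K) : inclusionProb μ ∈ fluidPolytope ι K :=
  ⟨fun j => ⟨inclusionProb_nonneg μ j, inclusionProb_le_one μ j⟩, sum_inclusionProb_le hμ⟩

theorem fluidPolytope_subset_closure_inclusionProb (m K : ℕ) :
    fluidPolytope (Fin m) K ⊆
      closure (inclusionProb '' {μ : PMF (Finset (Fin m)) | ∀ A ∈ μ.support, #A ≤ K}) := by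
  rintro x ⟨hx, hxK⟩
  have hlim : Tendsto (fun N : ℕ => fun j => (⌊x j * N⌋₊ : ℝ) / N) atTop (𝓝 x) :=
    tendsto_pi_nhds.2 fun j =>
      (tendsto_nat_floor_mul_div_atTop (hx j).1).comp tendsto_natCast_atTop_atTop
  refine mem_closure_of_tendsto hlim (eventually_atTop.2 ⟨1, fun N hN => ?_⟩)
  have hfloor : ∀ j, (⌊x j * N⌋₊ : ℝ) ≤ x j * N := fun j =>
    Nat.floor_le (mul_nonneg (hx j).1 N.cast_nonneg)
  have haN : ∀ j, ⌊x j * N⌋₊ ≤ N := fun j =>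
    Nat.floor_le_of_le (mul_le_of_le_one_left N.cast_nonneg (hx j).2)
  have haK : ∑ j, ⌊x j * N⌋₊ ≤ K * N := by
    have : ∑ j, (⌊x j * N⌋₊ : ℝ) ≤ K * N := calc
      ∑ j, (⌊x j * N⌋₊ : ℝ) ≤ ∑ j, x j * N := sum_le_sum fun j _ => hfloor j
      _ = (∑ j, x j) * N := (sum_mul ..).symm
      _ ≤ K * N := mul_le_mul_of_nonneg_right hxK N.cast_nonneg
    exact_mod_cast this
  obtain ⟨col, hcol_inj, hcol_card⟩ := exists_column_assignment hN _ haN haK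
  obtain ⟨μ, hμ, hμx⟩ := exists_pmf_inclusionProb_eq_of_column_assignment hN col hcol_inj hcol_card
  exact ⟨μ, hμ, funext hμx⟩

theorem stmt7_general (d K m : ℕ) (hd : 0 < d)
    (c : Fin d → ℝ)
    (t : Fin m → Fin d → ℝ) :
    sSup {v : ℝ | ∃ x : Fin m → ℝ, (∀ j, 0 ≤ x j ∧ x j ≤ 1) ∧
        (∑ j, x j) ≤ (K : ℝ) ∧
        v = finMin hd (fun k => c k * ∑ j, x j * t j k)}
    = sSup {v : ℝ | ∃ μ : PMF (Finset (Fin m)),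
        (∀ A ∈ μ.support, A.card ≤ K) ∧
        v = finMin hd (fun k => c k *
          ∑ A : Finset (Fin m), (μ A).toReal * ∑ j ∈ A, t j k)} := by
  set F : (Fin m → ℝ) → ℝ := fun x => finMin hd fun k => c k * ∑ j, x j * t j k
  have hF : Continuous F :=
    Continuous.finset_inf'_apply (f := fun k (x : Fin m → ℝ) => c k * ∑ j, x j * t j k) _
      fun k _ => by fun_prop
  have hLP : {v : ℝ | ∃ x : Fin m → ℝ, (∀ j, 0 ≤ x j ∧ x j ≤ 1) ∧ (∑ j, x j) ≤ (K : ℝ) ∧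
      v = F x} = F '' fluidPolytope (Fin m) K := by
    ext v
    simp [fluidPolytope, eq_comm, and_assoc]
  have hOFF : {v : ℝ | ∃ μ : PMF (Finset (Fin m)), (∀ A ∈ μ.support, A.card ≤ K) ∧
      v = finMin hd (fun k => c k * ∑ A : Finset (Fin m), (μ A).toReal * ∑ j ∈ A, t j k)} =
      F '' (inclusionProb '' {μ | ∀ A ∈ μ.support, #A ≤ K}) := by
    ext v
    simp [F, sum_toReal_mul_sum_eq_sum_inclusionProb_mul, eq_comm]
  rw [hLP, hOFF]
  refine csSup_image_eq_of_subset_closure hF (isCompact_fluidPolytope _ K) ⟨_, PMF.pure ∅, ?_, rfl⟩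
    (Set.image_subset_iff.2 fun μ hμ => inclusionProb_mem_fluidPolytope hμ)
    (fluidPolytope_subset_closure_inclusionProb m K)
  simp

/-- Equivalence of the fluid LP optimum and the optimal offline randomized
algorithm: the sup of fluid LP values equals the sup, over random subsets `A`
(laws `μ` on subsets with `|A| ≤ K` a.s.), of `min_k c_k E[φ_k(A)]`. -/
theorem stmt7 (d K m : ℕ) (hd : 0 < d)
    (c : Fin d → ℝ) (hc : ∀ k, 0 < c k)
    (t : Fin m → Fin d → ℝ) (ht : ∀ j k, t j k = 0 ∨ t j k = 1) :
    sSup {v : ℝ | ∃ x : Fin m → ℝ, (∀ j, 0 ≤ x j ∧ x j ≤ 1) ∧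
        (∑ j, x j) ≤ (K : ℝ) ∧
        v = finMin hd (fun k => c k * ∑ j, x j * t j k)}
    = sSup {v : ℝ | ∃ μ : PMF (Finset (Fin m)),
        (∀ A ∈ μ.support, A.card ≤ K) ∧
        v = finMin hd (fun k => c k *
          ∑ A : Finset (Fin m), (μ A).toReal * ∑ j ∈ A, t j k)} :=
  stmt7_general d K m hd c t
end

section
/- (Fluid relaxation vs. intermediate formulation.) Let S = ∪_{i∈[n]} R_i with core sets P_i = {j ∈ R_i : Σ_k t_{jk} ≥ √d}, capacity K = na for a ∈ ℕ+, and let b̄_k = max_i φ_k(R_i), b̲_k = min_i φ_k(R_i) > 0, 𝔟 = max_k b̄_k/b̲_k. Let OPT be the fluid LP optimum, and let INT be the optimum of: maximize min_k c_k(Σ_i z_{ik} + Σ_j y_j t_{jk}) subject to 0 ≤ y_j ≤ 1 for j ∈ P_i, y_j = 0 for j ∉ ∪_i P_i, Σ_k z_{ik} ≤ √d·a per round, 0 ≤ z_{ik} ≤ φ_k(R_i). Then INT ≥ OPT/𝔟. -/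
/-- Maximum of a function over `Fin d` (with `0 < d`). -/
noncomputable def finMax {d : ℕ} (hd : 0 < d) (f : Fin d → ℝ) : ℝ :=
  Finset.univ.sup' ⟨⟨0, hd⟩, Finset.mem_univ _⟩ f

/-- Fluid relaxation vs. intermediate formulation: the intermediate optimum
`INT` (selection `y` supported on core candidates, per-round adjustments `z`
with `Σ_k z_{ik} ≤ √d·a` and `z_{ik} ≤ φ_k(R_i)`) satisfies `INT ≥ OPT/𝔟`. -/
theorem stmt14 (d n m : ℕ) (hd : 0 < d) (hn : 0 < n) (a : ℕ) (ha : 0 < a)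
    (c : Fin d → ℝ) (hc : ∀ k, 0 < c k)
    (rnd : Fin m → Fin n)
    (t : Fin m → Fin d → ℝ) (ht : ∀ j k, t j k = 0 ∨ t j k = 1)
    (φ : Fin n → Fin d → ℝ)
    (hφ : ∀ i k, φ i k = ∑ j ∈ Finset.univ.filter (fun j => rnd j = i), t j k)
    (bbar bund : Fin d → ℝ)
    (hbbar : ∀ k, bbar k = finMax hn (fun i => φ i k))
    (hbund : ∀ k, bund k = finMin hn (fun i => φ i k))
    (hbpos : ∀ k, 0 < bund k)
    (bfrak : ℝ) (hbfrak : bfrak = finMax hd (fun k => bbar k / bund k))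
    (core : Fin m → Prop) (hcore : ∀ j, core j ↔ Real.sqrt d ≤ ∑ k, t j k)
    (OPT : ℝ)
    (hOPT : IsGreatest {v : ℝ | ∃ x : Fin m → ℝ, (∀ j, 0 ≤ x j ∧ x j ≤ 1) ∧
        (∑ j, x j) ≤ (n * a : ℝ) ∧
        v = finMin hd (fun k => c k * ∑ j, x j * t j k)} OPT)
    (INT : ℝ)
    (hINT : IsGreatest {v : ℝ | ∃ y : Fin m → ℝ, ∃ z : Fin n → Fin d → ℝ,
        (∀ j, 0 ≤ y j ∧ y j ≤ 1) ∧ (∀ j, ¬ core j → y j = 0) ∧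
        (∀ i, ∑ k, z i k ≤ Real.sqrt d * a) ∧
        (∀ i k, 0 ≤ z i k ∧ z i k ≤ φ i k) ∧
        v = finMin hd (fun k => c k * ((∑ i, z i k) + ∑ j, y j * t j k))} INT) :
    OPT / bfrak ≤ INT := by
  classical
  obtain ⟨⟨x, hx01, hxsum, hOPTeq⟩, -⟩ := hOPT
  obtain ⟨-, hINTub⟩ := hINT
  have ht0 : ∀ j k, 0 ≤ t j k := by
    intro j k; rcases ht j k with h | h <;> simp [h]
  have ht1 : ∀ j k, t j k ≤ 1 := by
    intro j k; rcases ht j k with h | h <;> simp [h]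
  have htsum0 : ∀ j, 0 ≤ ∑ k, t j k := fun j => Finset.sum_nonneg fun k _ => ht0 j k
  have hφ0 : ∀ i k, 0 ≤ φ i k := by
    intro i k; rw [hφ]; exact Finset.sum_nonneg fun j _ => ht0 j k
  have hbund_le : ∀ i k, bund k ≤ φ i k := by
    intro i k; rw [hbund]; unfold finMin; exact Finset.inf'_le _ (Finset.mem_univ i)
  have hle_bbar : ∀ i k, φ i k ≤ bbar k := by
    intro i k; rw [hbbar]; unfold finMax; exact Finset.le_sup' (fun i => φ i k) (Finset.mem_univ i)
  have hbb : ∀ k, bund k ≤ bbar k := fun k => (hbund_le ⟨0, hn⟩ k).trans (hle_bbar ⟨0, hn⟩ k)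
  have hbfrak_ge : ∀ k, bbar k / bund k ≤ bfrak := by
    intro k; rw [hbfrak]; unfold finMax; exact Finset.le_sup' (fun k => bbar k / bund k) (Finset.mem_univ k)
  have hbfrak1 : (1:ℝ) ≤ bfrak := by
    have h1 : (1:ℝ) ≤ bbar ⟨0,hd⟩ / bund ⟨0,hd⟩ := (one_le_div (hbpos _)).2 (hbb _)
    exact h1.trans (hbfrak_ge _)
  have hbfrak0 : (0:ℝ) < bfrak := lt_of_lt_of_le one_pos hbfrak1
  have hn' : (0:ℝ) < n := Nat.cast_pos.2 hn
  set vk : Fin d → ℝ := fun k => ∑ j, (if core j then 0 else x j * t j k) with hvk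
  have hvk0 : ∀ k, 0 ≤ vk k := by
    intro k; apply Finset.sum_nonneg; intro j _
    split
    · exact le_refl 0
    · exact mul_nonneg (hx01 j).1 (ht0 j k)
  set y : Fin m → ℝ := fun j => if core j then x j else 0 with hy
  set z : Fin n → Fin d → ℝ := fun i k => min (φ i k) (vk k / n) with hz
  have hsum_t : ∀ k, ∑ i, φ i k = ∑ j, t j k := by
    intro k
    simp only [hφ]
    exact Finset.sum_fiberwise Finset.univ rnd (fun j => t j k)
  have hvk_le : ∀ k, vk k ≤ n * bbar k := by
    intro k
    have h1 : vk k ≤ ∑ j, t j k := by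
      apply Finset.sum_le_sum
      intro j _
      split
      · exact ht0 j k
      · calc x j * t j k ≤ 1 * t j k :=
              mul_le_mul_of_nonneg_right (hx01 j).2 (ht0 j k)
          _ = t j k := one_mul _
    calc vk k ≤ ∑ j, t j k := h1
      _ = ∑ i, φ i k := (hsum_t k).symm
      _ ≤ ∑ _i : Fin n, bbar k := Finset.sum_le_sum fun i _ => hle_bbar i k
      _ = n * bbar k := by simp [Finset.sum_const, mul_comm]
  -- lower bound on z
  have hzlb : ∀ i k, vk k / n * (bund k / bbar k) ≤ z i k := by
    intro i k
    have hb0 : (0:ℝ) < bund k := hbpos k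
    have hb1 : (0:ℝ) < bbar k := lt_of_lt_of_le hb0 (hbb k)
    have hw0 : (0:ℝ) ≤ vk k / n := div_nonneg (hvk0 k) hn'.le
    have hwle : vk k / n ≤ bbar k := by
      rw [div_le_iff₀ hn']
      calc vk k ≤ n * bbar k := hvk_le k
        _ = bbar k * n := mul_comm _ _
    rcases le_total (φ i k) (vk k / n) with h | h
    · have hmin : z i k = φ i k := min_eq_left h
      rw [hmin]
      calc vk k / n * (bund k / bbar k) = (vk k / n / bbar k) * bund k := by ring
        _ ≤ 1 * bund k :=
            mul_le_mul_of_nonneg_right ((div_le_one hb1).2 hwle) hb0.le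
        _ = bund k := one_mul _
        _ ≤ φ i k := hbund_le i k
    · have hmin : z i k = vk k / n := min_eq_right h
      rw [hmin]
      calc vk k / n * (bund k / bbar k) ≤ vk k / n * 1 :=
            mul_le_mul_of_nonneg_left ((div_le_one hb1).2 (hbb k)) hw0
        _ = vk k / n := mul_one _
  have hzsum_lb : ∀ k, vk k / bfrak ≤ ∑ i, z i k := by
    intro k
    have hb1 : (0:ℝ) < bbar k := lt_of_lt_of_le (hbpos k) (hbb k)
    have h1 : ∑ _i : Fin n, vk k / n * (bund k / bbar k) ≤ ∑ i, z i k :=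
      Finset.sum_le_sum fun i _ => hzlb i k
    have h2 : ∑ _i : Fin n, vk k / n * (bund k / bbar k)
        = vk k * (bund k / bbar k) := by
      rw [Finset.sum_const, Finset.card_univ, Fintype.card_fin, nsmul_eq_mul]
      field_simp
    have h3 : vk k / bfrak ≤ vk k * (bund k / bbar k) := by
      have hfr : bbar k / bund k ≤ bfrak := hbfrak_ge k
      have hfr0 : (0:ℝ) < bbar k / bund k := div_pos hb1 (hbpos k)
      have : (1:ℝ) / bfrak ≤ 1 / (bbar k / bund k) :=
        one_div_le_one_div_of_le hfr0 hfr
      have h4 : (1:ℝ) / (bbar k / bund k) = bund k / bbar k := by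
        rw [one_div_div]
      calc vk k / bfrak = vk k * (1 / bfrak) := by ring
        _ ≤ vk k * (1 / (bbar k / bund k)) :=
            mul_le_mul_of_nonneg_left this (hvk0 k)
        _ = vk k * (bund k / bbar k) := by rw [h4]
    calc vk k / bfrak ≤ vk k * (bund k / bbar k) := h3
      _ = ∑ _i : Fin n, vk k / n * (bund k / bbar k) := h2.symm
      _ ≤ ∑ i, z i k := h1
  -- membership of candidate in the INT feasible set
  have hval :
      finMin hd (fun k => c k * ((∑ i, z i k) + ∑ j, y j * t j k)) ≤ INT := by
    apply hINTub
    refine ⟨y, z, ?_, ?_, ?_, ?_, rfl⟩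
    · intro j; simp only [hy]
      split
      · exact hx01 j
      · exact ⟨le_refl 0, zero_le_one⟩
    · intro j hj; simp only [hy, if_neg hj]
    · intro i
      have hzle : ∀ k, z i k ≤ vk k / n := fun k => min_le_right _ _
      have h1 : ∑ k, z i k ≤ ∑ k, vk k / n := Finset.sum_le_sum fun k _ => hzle k
      have h2 : ∑ k, vk k / n = (∑ k, vk k) / n := by
        rw [Finset.sum_div]
      have hd0 : (0:ℝ) ≤ Real.sqrt d := Real.sqrt_nonneg _
      have h3 : ∑ k, vk k ≤ Real.sqrt d * (n * a) := by
        have h4 : ∑ k, vk k = ∑ j, (if core j then 0 else x j * ∑ k, t j k) := by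
          rw [Finset.sum_comm]
          apply Finset.sum_congr rfl
          intro j _
          split
          · simp
          · rw [Finset.mul_sum]
        rw [h4]
        have h5 : ∑ j, (if core j then 0 else x j * ∑ k, t j k)
            ≤ ∑ j, x j * Real.sqrt d := by
          apply Finset.sum_le_sum
          intro j _
          split
          · exact mul_nonneg (hx01 j).1 hd0
          · next hj =>
            have : ∑ k, t j k < Real.sqrt d := lt_of_not_ge (fun h => hj ((hcore j).2 h))
            exact mul_le_mul_of_nonneg_left this.le (hx01 j).1
        calc ∑ j, (if core j then 0 else x j * ∑ k, t j k)
            ≤ ∑ j, x j * Real.sqrt d := h5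
          _ = (∑ j, x j) * Real.sqrt d := by rw [← Finset.sum_mul]
          _ ≤ (n * a) * Real.sqrt d := mul_le_mul_of_nonneg_right hxsum hd0
          _ = Real.sqrt d * (n * a) := mul_comm _ _
      calc ∑ k, z i k ≤ (∑ k, vk k) / n := h1.trans_eq h2
        _ ≤ Real.sqrt d * (n * a) / n := by
            apply div_le_div_of_nonneg_right h3 hn'.le
        _ = Real.sqrt d * a := by field_simp
    · intro i k
      exact ⟨le_min (hφ0 i k) (div_nonneg (hvk0 k) hn'.le), min_le_left _ _⟩
  refine le_trans ?_ hval
  rw [hOPTeq]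
  unfold finMin
  apply Finset.le_inf'
  intro k _
  have hsplit : ∑ j, x j * t j k = vk k + ∑ j, y j * t j k := by
    rw [hvk, hy, ← Finset.sum_add_distrib]
    apply Finset.sum_congr rfl
    intro j _
    by_cases h : core j <;> simp [h]
  have hS0 : (0:ℝ) ≤ ∑ j, y j * t j k := by
    apply Finset.sum_nonneg
    intro j _
    simp only [hy]
    split
    · exact mul_nonneg (hx01 j).1 (ht0 j k)
    · simp
  have hS : (∑ j, y j * t j k) / bfrak ≤ ∑ j, y j * t j k := by
    calc (∑ j, y j * t j k) / bfrak ≤ (∑ j, y j * t j k) / 1 :=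
          div_le_div_of_nonneg_left hS0 one_pos hbfrak1
      _ = ∑ j, y j * t j k := div_one _
  have hstep : c k * (∑ j, x j * t j k) / bfrak
      ≤ c k * ((∑ i, z i k) + ∑ j, y j * t j k) := by
    rw [hsplit]
    have h1 : (vk k + ∑ j, y j * t j k) / bfrak
        ≤ (∑ i, z i k) + ∑ j, y j * t j k := by
      rw [add_div]
      exact add_le_add (hzsum_lb k) hS
    calc c k * (vk k + ∑ j, y j * t j k) / bfrak
        = c k * ((vk k + ∑ j, y j * t j k) / bfrak) := by ring
      _ ≤ c k * ((∑ i, z i k) + ∑ j, y j * t j k) :=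
          mul_le_mul_of_nonneg_left h1 (hc k).le
  refine le_trans ?_ hstep
  apply div_le_div_of_nonneg_right ?_ hbfrak0.le
  exact Finset.inf'_le _ (Finset.mem_univ k)
end

section
/- (Scaling intermediate to fluid solutions.) Let (y, z) be feasible for INT (as above), with b̄ = max_{i,k} φ_k(R_i) and all φ_k(R_i) > 0. Define, for j ∈ R_i, x̂_j = (y_j/2)·min(1, a/(Σ_k φ_k(R_i)/√d)) + max_k(z_{ik} t_{jk}/φ_k(R_i))/(2√d). Then x̂ is feasible for the fluid LP with capacity na (i.e., 0 ≤ x̂_j ≤ 1 and Σ_j x̂_j ≤ na), and min_k c_k Σ_j x̂_j t_{jk} ≥ (min(1, a/b̄)/(2√d)) · min_k c_k(Σ_i z_{ik} + Σ_j y_j t_{jk}). -/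
/-- Scaling intermediate solutions to fluid solutions: given `(y, z)` feasible
for the intermediate formulation, the scaled solution `x̂` is feasible for the
fluid LP with capacity `n·a` and its min-utility objective is at least
`min(1, a/b̄)/(2√d)` times the intermediate objective of `(y, z)`. -/
theorem stmt15 (d n m : ℕ) (hd : 0 < d) (hn : 0 < n) (a : ℝ) (ha : 0 < a)
    (c : Fin d → ℝ) (hc : ∀ k, 0 < c k)
    (rnd : Fin m → Fin n)
    (t : Fin m → Fin d → ℝ) (ht : ∀ j k, t j k = 0 ∨ t j k = 1)
    (φ : Fin n → Fin d → ℝ)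
    (hφ : ∀ i k, φ i k = ∑ j ∈ Finset.univ.filter (fun j => rnd j = i), t j k)
    (hφpos : ∀ i k, 0 < φ i k)
    (bbar : ℝ) (hbbar : bbar = finMax hn (fun i => finMax hd (fun k => φ i k)))
    (core : Fin m → Prop) (hcore : ∀ j, core j ↔ Real.sqrt d ≤ ∑ k, t j k)
    (y : Fin m → ℝ) (hy : ∀ j, 0 ≤ y j ∧ y j ≤ 1)
    (hycore : ∀ j, ¬ core j → y j = 0)
    (z : Fin n → Fin d → ℝ) (hz : ∀ i k, 0 ≤ z i k ∧ z i k ≤ φ i k)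
    (hzsum : ∀ i, ∑ k, z i k ≤ Real.sqrt d * a)
    (xhat : Fin m → ℝ)
    (hxhat : ∀ j, xhat j =
      y j / 2 * min 1 (a / ((∑ k, φ (rnd j) k) / Real.sqrt d))
      + finMax hd (fun k => z (rnd j) k * t j k / φ (rnd j) k) / (2 * Real.sqrt d)) :
    ((∀ j, 0 ≤ xhat j ∧ xhat j ≤ 1) ∧ ∑ j, xhat j ≤ n * a) ∧
    min 1 (a / bbar) / (2 * Real.sqrt d) *
        finMin hd (fun k => c k * ((∑ i, z i k) + ∑ j, y j * t j k))
      ≤ finMin hd (fun k => c k * ∑ j, xhat j * t j k) := by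
  have k0 : Fin d := ⟨0, hd⟩
  set s := Real.sqrt d with hs
  have hs0 : 0 < s := Real.sqrt_pos.2 (by exact_mod_cast hd)
  have hs1 : (1:ℝ) ≤ s := Real.one_le_sqrt.2 (by exact_mod_cast hd)
  have hss : s * s = (d:ℝ) := Real.mul_self_sqrt (by positivity)
  have ht0 : ∀ j k, 0 ≤ t j k := fun j k => by rcases ht j k with h | h <;> simp [h]
  have ht1 : ∀ j k, t j k ≤ 1 := fun j k => by rcases ht j k with h | h <;> simp [h]
  have hφs : ∀ i, 0 < ∑ k, φ i k := fun i =>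
    Finset.sum_pos (fun k _ => hφpos i k) ⟨k0, Finset.mem_univ _⟩
  have hbb : ∀ i k, φ i k ≤ bbar := by
    intro i k
    rw [hbbar]
    calc φ i k ≤ finMax hd (fun k => φ i k) := Finset.le_sup' _ (Finset.mem_univ k)
    _ ≤ _ := Finset.le_sup' (fun i => finMax hd (fun k => φ i k)) (Finset.mem_univ i)
  have hbb0 : 0 < bbar := lt_of_lt_of_le (hφpos ⟨0, hn⟩ k0) (hbb _ _)
  set m₁ : ℝ := min 1 (a / bbar) with hm₁
  have hm₁0 : 0 ≤ m₁ := le_min zero_le_one (by positivity)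
  have hm₁1 : m₁ ≤ 1 := min_le_left _ _
  -- nonnegativity of the per-round min factor
  have hMnn : ∀ i, 0 ≤ min 1 (a / ((∑ k, φ i k) / s)) := fun i =>
    le_min zero_le_one (div_pos ha (div_pos (hφs i) hs0)).le
  have hM1 : ∀ i, min 1 (a / ((∑ k, φ i k) / s)) ≤ 1 := fun i => min_le_left _ _
  -- the per-round min factor dominates m₁ / s
  have hMge : ∀ i, m₁ / s ≤ min 1 (a / ((∑ k, φ i k) / s)) := by
    intro i
    have h1 : (∑ k, φ i k) / s ≤ s * bbar := by
      have hd1 : (∑ k, φ i k) ≤ (d:ℝ) * bbar := by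
        calc (∑ k, φ i k) ≤ ∑ _k : Fin d, bbar :=
          Finset.sum_le_sum (fun k _ => hbb i k)
        _ = (d:ℝ) * bbar := by simp [mul_comm]
      rw [div_le_iff₀ hs0]
      calc (∑ k, φ i k) ≤ (d:ℝ) * bbar := hd1
      _ = s * bbar * s := by rw [← hss]; ring
    have h2 : a / (s * bbar) ≤ a / ((∑ k, φ i k) / s) :=
      div_le_div_of_nonneg_left ha.le (div_pos (hφs i) hs0) h1
    have h3 : m₁ / s = min (1 / s) (a / (s * bbar)) := by
      rw [hm₁, ← min_div_div_right hs0.le]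
      congr 1
      rw [div_div]
      ring_nf
    rw [h3]
    refine le_min (le_trans (min_le_left _ _) ?_) (le_trans (min_le_right _ _) h2)
    rw [div_le_one hs0]
    exact hs1
  -- finMax bounds
  have hBle : ∀ j, finMax hd (fun k => z (rnd j) k * t j k / φ (rnd j) k) ≤ 1 := by
    intro j
    apply Finset.sup'_le
    intro k _
    rw [div_le_one (hφpos _ k)]
    calc z (rnd j) k * t j k ≤ z (rnd j) k * 1 :=
      mul_le_mul_of_nonneg_left (ht1 j k) (hz _ k).1
    _ = z (rnd j) k := mul_one _
    _ ≤ φ (rnd j) k := (hz _ k).2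
  have hB0 : ∀ j, 0 ≤ finMax hd (fun k => z (rnd j) k * t j k / φ (rnd j) k) := by
    intro j
    refine le_trans ?_ (Finset.le_sup' _ (Finset.mem_univ k0))
    have h1 := (hz (rnd j) k0).1
    have h2 := ht0 j k0
    have h3 := (hφpos (rnd j) k0)
    positivity
  have hBsum : ∀ j, finMax hd (fun k => z (rnd j) k * t j k / φ (rnd j) k) ≤
      ∑ k, z (rnd j) k * t j k / φ (rnd j) k := by
    intro j
    apply Finset.sup'_le
    intro k _
    refine Finset.single_le_sum
      (f := fun l => z (rnd j) l * t j l / φ (rnd j) l) (fun l _ => ?_)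
      (Finset.mem_univ k)
    have h1 := (hz (rnd j) l).1
    have h2 := ht0 j l
    have h3 := hφpos (rnd j) l
    positivity
  -- pointwise feasibility
  have hpt : ∀ j, 0 ≤ xhat j ∧ xhat j ≤ 1 := by
    intro j
    rw [hxhat j]
    constructor
    · have h1 : 0 ≤ y j / 2 * min 1 (a / ((∑ k, φ (rnd j) k) / s)) :=
        mul_nonneg (by linarith [(hy j).1]) (hMnn (rnd j))
      have h2 := hB0 j
      positivity
    · have h1 : y j / 2 * min 1 (a / ((∑ k, φ (rnd j) k) / s)) ≤ 1 / 2 := by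
        have := mul_le_mul (show y j / 2 ≤ 1 / 2 by linarith [(hy j).2])
          (hM1 (rnd j)) (hMnn (rnd j)) (by norm_num)
        linarith
      have h2 : finMax hd (fun k => z (rnd j) k * t j k / φ (rnd j) k) / (2 * s)
          ≤ 1 / 2 := by
        calc _ ≤ 1 / (2 * s) := div_le_div_of_nonneg_right (hBle j) (by positivity)
        _ ≤ 1 / 2 :=
          div_le_div_of_nonneg_left one_pos.le (by norm_num) (by linarith)
      linarith
  -- grouping sums by rounds
  have hgroup : ∀ f : Fin m → ℝ,
      ∑ j, f j = ∑ i, ∑ j ∈ Finset.univ.filter (fun j => rnd j = i), f j :=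
    fun f => (Finset.sum_fiberwise Finset.univ rnd f).symm
  have hφ' : ∀ i k, ∑ j ∈ Finset.univ.filter (fun j => rnd j = i), t j k = φ i k :=
    fun i k => (hφ i k).symm
  -- the z-sums over each round collapse
  have hzgrpR : ∀ i k, ∑ j ∈ Finset.univ.filter (fun j => rnd j = i),
      z i k * t j k / φ i k = z i k := by
    intro i k
    have h1 : ∀ j ∈ Finset.univ.filter (fun j => rnd j = i),
        z i k * t j k / φ i k = z i k / φ i k * t j k := fun j _ => by ring
    rw [Finset.sum_congr rfl h1, ← Finset.mul_sum, hφ' i k,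
      div_mul_cancel₀ _ (hφpos i k).ne']
  have hzgrp : ∀ k, ∑ j, z (rnd j) k * t j k / φ (rnd j) k = ∑ i, z i k := by
    intro k
    rw [hgroup (fun j => z (rnd j) k * t j k / φ (rnd j) k)]
    apply Finset.sum_congr rfl
    intro i _
    have h1 : ∀ j ∈ Finset.univ.filter (fun j => rnd j = i),
        z (rnd j) k * t j k / φ (rnd j) k = z i k * t j k / φ i k := by
      intro j hj
      rw [(Finset.mem_filter.1 hj).2]
    rw [Finset.sum_congr rfl h1, hzgrpR i k]
  -- y sums per round
  have hysum : ∀ i, s * ∑ j ∈ Finset.univ.filter (fun j => rnd j = i), y j ≤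
      ∑ k, φ i k := by
    intro i
    rw [Finset.mul_sum]
    calc ∑ j ∈ Finset.univ.filter (fun j => rnd j = i), s * y j
        ≤ ∑ j ∈ Finset.univ.filter (fun j => rnd j = i), ∑ k, t j k := by
          apply Finset.sum_le_sum
          intro j _
          by_cases hcj : core j
          · calc s * y j ≤ s * 1 := mul_le_mul_of_nonneg_left (hy j).2 hs0.le
            _ = s := mul_one _
            _ ≤ ∑ k, t j k := (hcore j).1 hcj
          · rw [hycore j hcj, mul_zero]
            exact Finset.sum_nonneg (fun k _ => ht0 j k)
    _ = ∑ k, ∑ j ∈ Finset.univ.filter (fun j => rnd j = i), t j k :=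
      Finset.sum_comm
    _ = ∑ k, φ i k := by simp [hφ']
  -- capacity
  have hcap : ∑ j, xhat j ≤ n * a := by
    rw [hgroup xhat]
    calc ∑ i, ∑ j ∈ Finset.univ.filter (fun j => rnd j = i), xhat j
        ≤ ∑ _i : Fin n, a := by
          apply Finset.sum_le_sum
          intro i _
          have hri : ∀ j ∈ Finset.univ.filter (fun j => rnd j = i), xhat j =
              y j / 2 * min 1 (a / ((∑ k, φ i k) / s)) +
              finMax hd (fun k => z i k * t j k / φ i k) / (2 * s) := by
            intro j hj
            rw [hxhat j, (Finset.mem_filter.1 hj).2]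
          rw [Finset.sum_congr rfl hri, Finset.sum_add_distrib]
          have hA : ∑ j ∈ Finset.univ.filter (fun j => rnd j = i),
              y j / 2 * min 1 (a / ((∑ k, φ i k) / s)) ≤ a / 2 := by
            rw [← Finset.sum_mul]
            have hP : (0:ℝ) < (∑ k, φ i k) / s := div_pos (hφs i) hs0
            have hsy : ∑ j ∈ Finset.univ.filter (fun j => rnd j = i), y j / 2
                ≤ (∑ k, φ i k) / s / 2 := by
              rw [← Finset.sum_div]
              apply div_le_div_of_nonneg_right _ (by norm_num)
              rw [le_div_iff₀ hs0, mul_comm]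
              exact hysum i
            have hysnn : 0 ≤ ∑ j ∈ Finset.univ.filter (fun j => rnd j = i),
                y j / 2 :=
              Finset.sum_nonneg (fun j _ => by linarith [(hy j).1])
            calc (∑ j ∈ Finset.univ.filter (fun j => rnd j = i), y j / 2) *
                  min 1 (a / ((∑ k, φ i k) / s))
                ≤ ((∑ k, φ i k) / s / 2) * (a / ((∑ k, φ i k) / s)) :=
                  mul_le_mul hsy (min_le_right _ _) (hMnn i) (by linarith)
            _ = a / 2 := by
                have h1 : (∑ k, φ i k) ≠ 0 := (hφs i).ne'
                have h2 : s ≠ 0 := hs0.ne'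
                field_simp
          have hZ : ∑ j ∈ Finset.univ.filter (fun j => rnd j = i),
              finMax hd (fun k => z i k * t j k / φ i k) / (2 * s) ≤ a / 2 := by
            have h1 : ∀ j ∈ Finset.univ.filter (fun j => rnd j = i),
                finMax hd (fun k => z i k * t j k / φ i k) / (2 * s) ≤
                (∑ k, z i k * t j k / φ i k) / (2 * s) := by
              intro j hj
              apply div_le_div_of_nonneg_right _ (by positivity)
              have h2 := hBsum j
              rw [(Finset.mem_filter.1 hj).2] at h2
              exact h2
            calc ∑ j ∈ Finset.univ.filter (fun j => rnd j = i),
                  finMax hd (fun k => z i k * t j k / φ i k) / (2 * s)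
                ≤ ∑ j ∈ Finset.univ.filter (fun j => rnd j = i),
                  (∑ k, z i k * t j k / φ i k) / (2 * s) :=
                  Finset.sum_le_sum h1
            _ = (∑ k, z i k) / (2 * s) := by
                rw [← Finset.sum_div]
                congr 1
                rw [Finset.sum_comm]
                exact Finset.sum_congr rfl (fun k _ => hzgrpR i k)
            _ ≤ (s * a) / (2 * s) :=
                div_le_div_of_nonneg_right (hzsum i) (by positivity)
            _ = a / 2 := by
                rw [mul_comm 2 s, mul_div_mul_left a 2 hs0.ne']
          linarith
    _ = n * a := by simp [mul_comm]
  refine ⟨⟨hpt, hcap⟩, ?_⟩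
  -- objective bound
  have hkey : ∀ k : Fin d,
      m₁ / (2 * s) * (c k * ((∑ i, z i k) + ∑ j, y j * t j k)) ≤
      c k * ∑ j, xhat j * t j k := by
    intro k
    have hck := (hc k).le
    rw [show m₁ / (2 * s) * (c k * ((∑ i, z i k) + ∑ j, y j * t j k)) =
      c k * (m₁ / (2 * s) * ((∑ i, z i k) + ∑ j, y j * t j k)) from by ring]
    refine mul_le_mul_of_nonneg_left ?_ hck
    calc m₁ / (2 * s) * ((∑ i, z i k) + ∑ j, y j * t j k)
        = (∑ i, z i k) * m₁ / (2 * s) + ∑ j, m₁ / (2 * s) * (y j * t j k) := by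
          rw [← Finset.mul_sum]; ring
    _ ≤ (∑ i, z i k) / (2 * s) + ∑ j, m₁ / (2 * s) * (y j * t j k) := by
        have hz0 : 0 ≤ ∑ i, z i k := Finset.sum_nonneg (fun i _ => (hz i k).1)
        have h1 : (∑ i, z i k) * m₁ ≤ (∑ i, z i k) * 1 :=
          mul_le_mul_of_nonneg_left hm₁1 hz0
        have h2 : (∑ i, z i k) * m₁ / (2 * s) ≤ (∑ i, z i k) * 1 / (2 * s) :=
          div_le_div_of_nonneg_right h1 (by positivity)
        rw [mul_one] at h2
        linarith
    _ = ∑ j, z (rnd j) k * t j k / φ (rnd j) k / (2 * s) +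
          ∑ j, m₁ / (2 * s) * (y j * t j k) := by
        rw [← Finset.sum_div, hzgrp k]
    _ ≤ ∑ j, z (rnd j) k * t j k / φ (rnd j) k / (2 * s) +
          ∑ j, y j / 2 * min 1 (a / ((∑ l, φ (rnd j) l) / s)) * t j k := by
        refine add_le_add le_rfl (Finset.sum_le_sum fun j _ => ?_)
        have h1 := hMge (rnd j)
        have hyt : 0 ≤ y j * t j k / 2 := by
          have := (hy j).1
          have := ht0 j k
          positivity
        calc m₁ / (2 * s) * (y j * t j k) = y j * t j k / 2 * (m₁ / s) := by ring
        _ ≤ y j * t j k / 2 * min 1 (a / ((∑ l, φ (rnd j) l) / s)) :=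
            mul_le_mul_of_nonneg_left h1 hyt
        _ = y j / 2 * min 1 (a / ((∑ l, φ (rnd j) l) / s)) * t j k := by ring
    _ ≤ ∑ j, xhat j * t j k := by
        rw [← Finset.sum_add_distrib]
        apply Finset.sum_le_sum
        intro j _
        rw [hxhat j, add_mul]
        have hB : z (rnd j) k * t j k / φ (rnd j) k / (2 * s) ≤
            finMax hd (fun l => z (rnd j) l * t j l / φ (rnd j) l) / (2 * s)
              * t j k := by
          rcases ht j k with h | h
          · simp [h]
          · have h1 : z (rnd j) k * t j k / φ (rnd j) k ≤
                finMax hd (fun l => z (rnd j) l * t j l / φ (rnd j) l) :=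
              Finset.le_sup' (fun l => z (rnd j) l * t j l / φ (rnd j) l)
                (Finset.mem_univ k)
            calc z (rnd j) k * t j k / φ (rnd j) k / (2 * s)
                ≤ finMax hd (fun l => z (rnd j) l * t j l / φ (rnd j) l)
                    / (2 * s) := div_le_div_of_nonneg_right h1 (by positivity)
            _ = _ * t j k := by rw [h, mul_one]
        linarith
  -- conclude with finMin
  apply Finset.le_inf'
  intro k _
  calc min 1 (a / bbar) / (2 * s) *
      finMin hd (fun k => c k * ((∑ i, z i k) + ∑ j, y j * t j k))
      ≤ min 1 (a / bbar) / (2 * s) *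
        (c k * ((∑ i, z i k) + ∑ j, y j * t j k)) := by
        refine mul_le_mul_of_nonneg_left ?_ (div_nonneg hm₁0 (by positivity))
        exact Finset.inf'_le _ (Finset.mem_univ k)
  _ ≤ c k * ∑ j, xhat j * t j k := hkey k
end

section
/- (Underrepresented-set counting in the controlled greedy process.) Suppose y : S → [0,1] satisfies Σ_{j∈S} y_j = K and, for each j and each τ ∈ [0, y_j), the set Y_j(τ) = {k : t_{jk} = 1 and v_{jk} + c_k τ < γ/√d} has |Y_j(τ)| ≥ √d, where v_{jk} ≥ 0 are the accumulated utilities before j. If additionally γ ≤ c_k K for every k, then for every dimension k: Σ_{j∈S} ∫₀^{y_j} 1[k ∈ Y_j(τ)] dτ = γ/(√d c_k). -/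
/-!
Write `A_k = γ / (√d c_k)` and `P_{jk} = Σ_{i<j} y_i t_{ik}`, so that `v_{jk} + c_k τ < γ/√d`
reads `P_{jk} + τ < A_k`. For fixed `k` the intervals `(P_{jk}, P_{jk} + y_j t_{jk}]` are
consecutive, so the integrals telescope to `min A_k (Σ_j y_j t_{jk}) ≤ A_k`. On the other hand,
counting dimensions instead, `|Y_j(τ)| ≥ √d` gives a total of at least `√d Σ_j y_j = √d K`, while
`γ ≤ c_k K` gives `Σ_k A_k ≤ d K / √d = √d K`. The termwise bounds therefore sum to an equality,
so each of them is one.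
-/

open MeasureTheory

theorem Fin.sum_sub_sum_Iio_telescope {M G : Type*} [AddCommMonoid M] [AddCommGroup G] :
    ∀ {m : ℕ} (x : Fin m → M) (φ : M → G),
      ∑ j, (φ (∑ i < j, x i + x j) - φ (∑ i < j, x i)) = φ (∑ j, x j) - φ 0
  | 0, _, _ => by simp
  | m + 1, x, φ => by
    have hlast : ∑ i < Fin.last m, x i = ∑ i : Fin m, x i.castSucc := by
      simp [Fin.Iio_last_eq_map]
    rw [Fin.sum_univ_castSucc, Fin.sum_univ_castSucc x]
    simp only [Fin.sum_Iio_castSucc]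
    rw [Fin.sum_sub_sum_Iio_telescope (fun i => x i.castSucc) φ, hlast]
    abel

theorem setIntegral_Ioc_ite_add_lt (S : ℝ) {b : ℝ} (hb : 0 ≤ b) (A : ℝ) :
    ∫ τ in Set.Ioc 0 b, (if S + τ < A then (1 : ℝ) else 0) = min A (S + b) - min A S := by
  have hind :
      (fun τ : ℝ => if S + τ < A then (1 : ℝ) else 0) = (Set.Iio (A - S)).indicator 1 := by
    ext τ
    simp [Set.indicator_apply, lt_sub_iff_add_lt']
  rw [integral_Ioc_eq_integral_Ioo, hind, setIntegral_indicator measurableSet_Iio,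
    Set.Ioo_inter_Iio]
  simp only [Pi.one_apply, setIntegral_const, Real.volume_real_Ioo, sub_zero, smul_eq_mul, mul_one,
    min_def, max_def]
  split_ifs <;> linarith

theorem sum_setIntegral_Ioc_ite_lt_le {m : ℕ} (y t : Fin m → ℝ) (hy : ∀ j, 0 ≤ y j)
    (ht : ∀ j, t j = 0 ∨ t j = 1) {A : ℝ} (hA : 0 ≤ A) :
    ∑ j, ∫ τ in Set.Ioc 0 (y j), (if t j = 1 ∧ ∑ i < j, y i * t i + τ < A then (1 : ℝ) else 0)
      ≤ A := by
  have hterm : ∀ j, ∫ τ in Set.Ioc 0 (y j),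
      (if t j = 1 ∧ ∑ i < j, y i * t i + τ < A then (1 : ℝ) else 0)
      = min A (∑ i < j, y i * t i + y j * t j) - min A (∑ i < j, y i * t i) := by
    intro j
    rcases ht j with h | h
    · simp [h]
    · simp only [h, true_and, mul_one]
      exact setIntegral_Ioc_ite_add_lt _ (hy j) A
  rw [Finset.sum_congr rfl fun j _ => hterm j, Fin.sum_sub_sum_Iio_telescope (fun j => y j * t j)]
  simp [min_eq_right hA]

theorem integrableOn_ite_one_zero {p : ℝ → Prop} [DecidablePred p] (hp : MeasurableSet {τ | p τ})
    {s : Set ℝ} (hs : volume s ≠ ⊤) :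
    IntegrableOn (fun τ => if p τ then (1 : ℝ) else 0) s := by
  have hind : (fun τ => if p τ then (1 : ℝ) else 0) = {τ | p τ}.indicator 1 := by
    ext τ; simp [Set.indicator_apply]
  rw [hind]
  exact (integrableOn_const hs).indicator hp

theorem mul_le_sum_setIntegral_Ioc {ι : Type*} (s : Finset ι) {f : ι → ℝ → ℝ} {a b : ℝ}
    (hb : 0 ≤ b) (hf : ∀ i ∈ s, IntegrableOn (f i) (Set.Ioc 0 b))
    (h : ∀ τ ∈ Set.Ioo 0 b, a ≤ ∑ i ∈ s, f i τ) :
    a * b ≤ ∑ i ∈ s, ∫ τ in Set.Ioc 0 b, f i τ := by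
  rw [← integral_finsetSum s hf, integral_Ioc_eq_integral_Ioo]
  calc a * b = ∫ _ in Set.Ioo 0 b, a := by
        rw [setIntegral_const, Real.volume_real_Ioo_of_le hb, smul_eq_mul, sub_zero, mul_comm]
    _ ≤ _ := setIntegral_mono_on (integrableOn_const measure_Ioo_lt_top.ne)
        (IntegrableOn.mono_set (integrable_finsetSum s hf) Set.Ioo_subset_Ioc_self)
        measurableSet_Ioo h

theorem sum_div_sqrt_mul_le {d : ℕ} {γ K : ℝ} (c : Fin d → ℝ) (hc : ∀ k, 0 < c k)
    (hγK : ∀ k, γ ≤ c k * K) :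
    ∑ k, γ / (√d * c k) ≤ √d * K := by
  calc ∑ k, γ / (√d * c k) ≤ ∑ _k : Fin d, K / √d := by
        refine Finset.sum_le_sum fun k _ => ?_
        rw [mul_comm, ← div_div]
        gcongr
        rw [div_le_iff₀ (hc k), mul_comm]
        exact hγK k
    _ = √d * K := by
        rw [Finset.sum_const, Finset.card_univ, Fintype.card_fin, nsmul_eq_mul, mul_div_left_comm,
          Real.div_sqrt, mul_comm]

theorem stmt17_general (d m : ℕ) (K : ℕ) (γ : ℝ) (hγ : 0 < γ)
    (c : Fin d → ℝ) (hc : ∀ k, 0 < c k)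
    (t : Fin m → Fin d → ℝ) (ht : ∀ j k, t j k = 0 ∨ t j k = 1)
    (y : Fin m → ℝ) (hy : ∀ j, 0 ≤ y j ∧ y j ≤ 1) (hysum : ∑ j, y j = (K : ℝ))
    (v : Fin m → Fin d → ℝ)
    (hv : ∀ j k, v j k =
      c k * ∑ j' ∈ Finset.univ.filter (fun j' => j' < j), y j' * t j' k)
    (hγK : ∀ k, γ ≤ c k * K)
    (hbig : ∀ j, ∀ τ : ℝ, 0 ≤ τ → τ < y j →
      Real.sqrt d ≤ (Finset.univ.filter
        (fun k : Fin d => t j k = 1 ∧ v j k + c k * τ < γ / Real.sqrt d)).card) :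
    ∀ k : Fin d,
      ∑ j, (∫ τ in Set.Ioc (0 : ℝ) (y j),
        (if t j k = 1 ∧ v j k + c k * τ < γ / Real.sqrt d then (1 : ℝ) else 0))
      = γ / (Real.sqrt d * c k) := by
  intro k₀
  have hsd : 0 < √(d : ℝ) := Real.sqrt_pos.2 (by exact_mod_cast k₀.pos)
  set F : Fin d → ℝ := fun k => ∑ j, ∫ τ in Set.Ioc (0 : ℝ) (y j),
    (if t j k = 1 ∧ v j k + c k * τ < γ / √d then (1 : ℝ) else 0) with hF
  have hupper : ∀ k ∈ Finset.univ, F k ≤ γ / (√d * c k) := by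
    intro k _
    have hlt : ∀ j τ, v j k + c k * τ < γ / √d ↔ ∑ i < j, y i * t i k + τ < γ / (√d * c k) := by
      intro j τ
      rw [hv, Finset.filter_gt_eq_Iio, div_mul_eq_div_div, lt_div_iff₀ (hc k)]
      constructor <;> intro h <;> linarith
    simp only [hF, hlt]
    exact sum_setIntegral_Ioc_ite_lt_le _ _ (fun j => (hy j).1) (fun j => ht j k)
      (div_pos hγ (mul_pos hsd (hc k))).le
  have hlower : √d * K ≤ ∑ k, F k := by
    rw [hF, Finset.sum_comm, ← hysum, Finset.mul_sum]
    refine Finset.sum_le_sum fun j _ => mul_le_sum_setIntegral_Ioc _ (hy j).1 (fun k _ => ?_) ?_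
    · refine integrableOn_ite_one_zero ?_ measure_Ioc_lt_top.ne
      exact (MeasurableSet.const _).inter
        (measurableSet_lt (measurable_const.add (measurable_const.mul measurable_id))
          measurable_const)
    · intro τ hτ
      rw [Finset.sum_boole]
      exact hbig j τ hτ.1.le hτ.2
  exact (Finset.sum_eq_sum_iff_of_le hupper).1
    (le_antisymm (Finset.sum_le_sum hupper) ((sum_div_sqrt_mul_le c hc hγK).trans hlower))
    k₀ (Finset.mem_univ k₀)

/-- Underrepresented-set counting in the controlled greedy process: if the
capacity is exactly depleted (`Σ y_j = K`), every underrepresented set along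
the process has size at least `√d`, and `γ ≤ c_k K` for all `k`, then for every
dimension `k` the utility accumulated while underrepresented equals
`γ/(√d·c_k)`. -/
theorem stmt17 (d m : ℕ) (hd : 0 < d) (K : ℕ) (hK : 0 < K) (γ : ℝ) (hγ : 0 < γ)
    (c : Fin d → ℝ) (hc : ∀ k, 0 < c k)
    (t : Fin m → Fin d → ℝ) (ht : ∀ j k, t j k = 0 ∨ t j k = 1)
    (y : Fin m → ℝ) (hy : ∀ j, 0 ≤ y j ∧ y j ≤ 1) (hysum : ∑ j, y j = (K : ℝ))
    (v : Fin m → Fin d → ℝ)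
    (hv : ∀ j k, v j k =
      c k * ∑ j' ∈ Finset.univ.filter (fun j' => j' < j), y j' * t j' k)
    (hγK : ∀ k, γ ≤ c k * K)
    (hbig : ∀ j, ∀ τ : ℝ, 0 ≤ τ → τ < y j →
      Real.sqrt d ≤ (Finset.univ.filter
        (fun k : Fin d => t j k = 1 ∧ v j k + c k * τ < γ / Real.sqrt d)).card) :
    ∀ k : Fin d,
      ∑ j, (∫ τ in Set.Ioc (0 : ℝ) (y j),
        (if t j k = 1 ∧ v j k + c k * τ < γ / Real.sqrt d then (1 : ℝ) else 0))
      = γ / (Real.sqrt d * c k) :=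
  stmt17_general d m K γ hγ c hc t ht y hy hysum v hv hγK hbig
end
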